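/- Flipping condition (flip): in the discrete auto rate-tuning model, suppose R(i) > 1 at time step i. Then the ratio flips in the next step, i.e. R(i+1) < 1, if and only if the learning rate satisfies λ(i) > κ(i). -/

import Mathlib

/-!
Write `a = σ_ℓ²(i)`, `b = σ_k²(i)` and `L = λ(i)²`. Clearing denominators, the gap
`c_k σ_ℓ²(i+1) - c_ℓ σ_k²(i+1)` factors as `(c_ℓ b - c_k a)(L c_ℓ c_k - a b) / (a b)`.
The first factor is positive because `R(i) > 1`, so the ratio flips exactly when
`a b < L c_ℓ c_k`, which is `κ(i) < λ(i)` after taking square roots.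
-/

theorem pos_of_succ_eq_add_div {s d : ℕ → ℝ} (h0 : 0 < s 0) (hd : ∀ n, 0 ≤ d n)
    (hs : ∀ n, s (n + 1) = s n + d n / s n) (n : ℕ) : 0 < s n := by
  induction n with
  | zero => exact h0
  | succ n ih => rw [hs]; have := hd n; positivity

theorem mul_add_div_sub_mul_add_div {K : Type*} [Field K] {a b cl ck L : K}
    (ha : a ≠ 0) (hb : b ≠ 0) :
    ck * (a + L * cl ^ 2 / a) - cl * (b + L * ck ^ 2 / b) =
      (cl * b - ck * a) * (L * (cl * ck) - a * b) / (a * b) := by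
  field_simp
  ring

theorem mul_add_div_lt_mul_add_div_iff {K : Type*} [Field K] [LinearOrder K]
    [IsStrictOrderedRing K] {a b cl ck L : K} (ha : 0 < a) (hb : 0 < b)
    (hab : ck * a < cl * b) :
    cl * (b + L * ck ^ 2 / b) < ck * (a + L * cl ^ 2 / a) ↔ a * b < L * (cl * ck) := by
  rw [← sub_pos, mul_add_div_sub_mul_add_div ha.ne' hb.ne',
    div_pos_iff_of_pos_right (mul_pos ha hb), mul_pos_iff_of_pos_left (sub_pos.2 hab),
    sub_pos]

theorem sqrt_mul_sqrt_div_sqrt_lt_iff {a b c t : ℝ} (ha : 0 ≤ a) (hc : 0 < c) (ht : 0 < t) :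
    √a * √b / √c < t ↔ a * b < t ^ 2 * c := by
  rw [← Real.sqrt_mul ha, ← Real.sqrt_div' _ hc.le, Real.sqrt_lt' ht, div_lt_iff₀ hc]

/-- Flipping condition (flip): if `R i > 1`, then `R (i+1) < 1` iff the
learning rate exceeds the flipping ratio. -/
theorem elr_ratio_flip_iff
    (cl ck : ℝ) (hcl : 0 < cl) (hck : 0 < ck)
    (lam : ℕ → ℝ) (hlam : ∀ i, 0 < lam i)
    (sl sk : ℕ → ℝ) (hsl0 : 0 < sl 0) (hsk0 : 0 < sk 0)
    (hsl : ∀ i, sl (i + 1) = sl i + (lam i) ^ 2 * cl ^ 2 / sl i)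
    (hsk : ∀ i, sk (i + 1) = sk i + (lam i) ^ 2 * ck ^ 2 / sk i)
    (R : ℕ → ℝ) (hR : ∀ i, R i = cl * sk i / (ck * sl i))
    (kap : ℕ → ℝ)
    (hkap : ∀ i, kap i = Real.sqrt (sl i) * Real.sqrt (sk i) / Real.sqrt (cl * ck))
    (i : ℕ) (hRi : 1 < R i) :
    R (i + 1) < 1 ↔ kap i < lam i := by
  have psl := pos_of_succ_eq_add_div hsl0 (fun n => by positivity) hsl
  have psk := pos_of_succ_eq_add_div hsk0 (fun n => by positivity) hsk
  rw [hR, one_lt_div (mul_pos hck (psl i))] at hRi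
  rw [hR, div_lt_one (mul_pos hck (psl _)), hsl, hsk,
    mul_add_div_lt_mul_add_div_iff (psl i) (psk i) hRi, hkap,
    sqrt_mul_sqrt_div_sqrt_lt_iff (psl i).le (mul_pos hcl hck) (hlam i)]
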